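/- Let d ≥ 2 be a real number. For every real ν ≥ 1, g₂(ν,d) < ((1+√(1+4d))/2)·exp(−(1+2d−√(1+4d))/(4d)). -/
import Mathlib


/-- `h₁(ν,d) = (ν+1)² + 4ν²(d−1)`. -/
noncomputable def h1 (ν d : ℝ) : ℝ := (ν + 1) ^ 2 + 4 * ν ^ 2 * (d - 1)

/-- `h₂(ν,d) = ((ν+1)·√(h₁(ν,d)) − (ν+1)²)/(4ν²(d−1)) − 1/2`. -/
noncomputable def h2 (ν d : ℝ) : ℝ :=
  ((ν + 1) * Real.sqrt (h1 ν d) - (ν + 1) ^ 2) / (4 * ν ^ 2 * (d - 1)) - 1 / 2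

/-- `g₁(ν,α,d) = (ν + 1 + (d−1)·α·ν)·exp(−(ν² + (d−1)·α²)/2)`. -/
noncomputable def g1 (ν α d : ℝ) : ℝ :=
  (ν + 1 + (d - 1) * α * ν) * Real.exp (-(ν ^ 2 + (d - 1) * α ^ 2) / 2)

/-- `g₂(ν,d) = ((ν + 1 + √(h₁(ν,d)))/2)·exp(−ν²/2 + h₂(ν,d))`. -/
noncomputable def g2 (ν d : ℝ) : ℝ :=
  ((ν + 1 + Real.sqrt (h1 ν d)) / 2) * Real.exp (-ν ^ 2 / 2 + h2 ν d)

set_option maxHeartbeats 1000000 in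
/-- For real `d ≥ 2` and every `ν ≥ 1`,
`g₂(ν,d) < ((1+√(1+4d))/2)·exp(−(1+2d−√(1+4d))/(4d))`. -/
theorem stmt_14 (d : ℝ) (hd : 2 ≤ d) (ν : ℝ) (hν : 1 ≤ ν) :
    g2 ν d <
      ((1 + Real.sqrt (1 + 4 * d)) / 2) *
        Real.exp (-(1 + 2 * d - Real.sqrt (1 + 4 * d)) / (4 * d)) := by
  have hν0 : (0:ℝ) < ν := lt_of_lt_of_le one_pos hν
  set u := Real.sqrt (1 + 4 * d) with hudef
  have hu2 : u ^ 2 = 1 + 4 * d := Real.sq_sqrt (by linarith)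
  have hu0 : 0 ≤ u := Real.sqrt_nonneg _
  have hu1 : 1 < u := by nlinarith [hu2, hu0]
  set s := Real.sqrt (h1 ν d) with hsdef
  have hs2 : s ^ 2 = (ν + 1) ^ 2 + 4 * ν ^ 2 * (d - 1) :=
    Real.sq_sqrt (by unfold h1; nlinarith)
  have hs0 : 0 ≤ s := Real.sqrt_nonneg _
  have r2 := Real.sqrt 2
  have hr2 : (Real.sqrt 2) ^ 2 = 2 := Real.sq_sqrt (by norm_num)
  have hr20 : 0 ≤ Real.sqrt 2 := Real.sqrt_nonneg _
  have hr2lt : Real.sqrt 2 < 3 / 2 := by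
    nlinarith [hr2, hr20]
  -- s ≥ √2 (ν+1)
  have hs_sq2 : Real.sqrt 2 * (ν + 1) ≤ s := by
    nlinarith [hs2, hr2, hs0, hr20, sq_nonneg (s - Real.sqrt 2 * (ν + 1)), sq_nonneg (ν - 1)]
  have hts : 0 < ν + 1 + s := by linarith
  -- step A : h2 = (ν+1)/(ν+1+s) - 1/2
  have hst : ν + 1 < s := by nlinarith [hs2, hs0]
  have hA : h2 ν d = (ν + 1) / (ν + 1 + s) - 1 / 2 := by
    unfold h2
    rw [← hsdef]
    have hDen : 4 * ν ^ 2 * (d - 1) = s ^ 2 - (ν + 1) ^ 2 := by linarith [hs2]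
    rw [hDen]
    have : ((ν + 1) * s - (ν + 1) ^ 2) / (s ^ 2 - (ν + 1) ^ 2) = (ν + 1) / (ν + 1 + s) := by
      rw [div_eq_div_iff (by nlinarith) (by linarith)]
      ring
    rw [this]
  -- step B : (ν+1)/(ν+1+s) ≤ √2 - 1
  have hB : (ν + 1) / (ν + 1 + s) ≤ Real.sqrt 2 - 1 := by
    rw [div_le_iff₀ hts]
    nlinarith [hs_sq2, hr2, hr20]
  -- step C : s ≤ ν * u
  have hC : s ≤ ν * u := by
    rw [hsdef, show ν * u = Real.sqrt ((ν * u) ^ 2) from (Real.sqrt_sq (by positivity)).symm]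
    apply Real.sqrt_le_sqrt
    unfold h1
    nlinarith [hu2]
  -- step F : ν * exp(-ν²/2 + (√2 - 3/2)) < exp(-1/2)
  have hF : ν * Real.exp (-ν ^ 2 / 2 + (Real.sqrt 2 - 3 / 2)) < Real.exp (-(1:ℝ) / 2) := by
    have hexp1 : ν ≤ Real.exp ((ν ^ 2 - 1) / 2) := by
      nlinarith [Real.add_one_le_exp ((ν ^ 2 - 1) / 2), sq_nonneg (ν - 1)]
    calc ν * Real.exp (-ν ^ 2 / 2 + (Real.sqrt 2 - 3 / 2))
        ≤ Real.exp ((ν ^ 2 - 1) / 2) * Real.exp (-ν ^ 2 / 2 + (Real.sqrt 2 - 3 / 2)) :=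
          mul_le_mul_of_nonneg_right hexp1 (Real.exp_nonneg _)
      _ = Real.exp ((ν ^ 2 - 1) / 2 + (-ν ^ 2 / 2 + (Real.sqrt 2 - 3 / 2))) :=
          (Real.exp_add _ _).symm
      _ < Real.exp (-(1:ℝ) / 2) := by
          apply Real.exp_lt_exp.mpr
          linarith
  -- step G : the right-hand side is at least ((2+u)/2) e^{-1/2}
  have hexp_eq : -(1 + 2 * d - u) / (4 * d) = -(1:ℝ) / 2 + 1 / (1 + u) := by
    have h1u : (0:ℝ) < 1 + u := by linarith
    have h4d : (0:ℝ) < 4 * d := by linarith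
    rw [div_add_div _ _ (by norm_num) (ne_of_gt h1u), div_eq_div_iff (ne_of_gt h4d) (by positivity)]
    ring_nf
    nlinarith [hu2]
  have hG : (2 + u) / 2 * Real.exp (-(1:ℝ) / 2) ≤
      (1 + u) / 2 * Real.exp (-(1 + 2 * d - u) / (4 * d)) := by
    rw [hexp_eq, Real.exp_add]
    have h1u : (0:ℝ) < 1 + u := by linarith
    have hkey : 2 + u ≤ (1 + u) * Real.exp (1 / (1 + u)) := by
      have h := Real.add_one_le_exp (1 / (1 + u))
      have hinv : (1 + u) * (1 / (1 + u)) = 1 := by field_simp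
      nlinarith [h, hinv, h1u]
    nlinarith [Real.exp_pos (-(1:ℝ) / 2), hkey]
  -- main chain
  have hgoal : g2 ν d = (ν + 1 + s) / 2 * Real.exp (-ν ^ 2 / 2 + h2 ν d) := by
    unfold g2; rw [← hsdef]
  rw [hgoal]
  calc (ν + 1 + s) / 2 * Real.exp (-ν ^ 2 / 2 + h2 ν d)
      ≤ (ν + 1 + s) / 2 * Real.exp (-ν ^ 2 / 2 + (Real.sqrt 2 - 3 / 2)) := by
        apply mul_le_mul_of_nonneg_left _ (by linarith)
        apply Real.exp_le_exp.mpr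
        rw [hA]
        linarith
    _ ≤ ν * (2 + u) / 2 * Real.exp (-ν ^ 2 / 2 + (Real.sqrt 2 - 3 / 2)) := by
        apply mul_le_mul_of_nonneg_right _ (Real.exp_nonneg _)
        have h2ν : ν * (2 + u) = 2 * ν + ν * u := by ring
        linarith [hC]
    _ = (2 + u) / 2 * (ν * Real.exp (-ν ^ 2 / 2 + (Real.sqrt 2 - 3 / 2))) := by ring
    _ < (2 + u) / 2 * Real.exp (-(1:ℝ) / 2) := by
        apply mul_lt_mul_of_pos_left hF
        linarith
    _ ≤ (1 + u) / 2 * Real.exp (-(1 + 2 * d - u) / (4 * d)) := hG
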